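/- If F is the output of the bundles local search algorithm and O is any properly colored forest with bundles, then |O \ F| ≤ 3|F \ O|, and consequently |O| ≤ 3|F|; i.e., the algorithm is a 1/3-approximation for the Maximum-size Properly Colored Forest with Bundles problem. -/

import Mathlib

open scoped Classical

/-- `e` is incident to vertex `v`. -/
def Inc {V ε : Type*} (ends : ε → V × V) (e : ε) (v : V) : Prop :=
  (ends e).1 = v ∨ (ends e).2 = v

/-- `e` joins the vertices `u` and `v`. -/
def Joins {V ε : Type*} (ends : ε → V × V) (e : ε) (u v : V) : Prop :=
  ends e = (u, v) ∨ ends e = (v, u)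

/-- A cycle of length `n` in the edge set `F` of a multigraph. -/
def IsCycleIn {V ε : Type*} (ends : ε → V × V) (F : Finset ε) (n : ℕ) : Prop :=
  ∃ (vs : ZMod n → V) (es : ZMod n → ε), Function.Injective vs ∧ Function.Injective es ∧
    ∀ i : ZMod n, es i ∈ F ∧ Joins ends (es i) (vs i) (vs (i + 1))

/-- `F` is a forest with bundles: no cycle on at least three vertices. -/
def IsForestWithBundles {V ε : Type*} (ends : ε → V × V) (F : Finset ε) : Prop :=
  ¬ ∃ n : ℕ, 3 ≤ n ∧ IsCycleIn ends F n

/-- `F` is properly colored: two distinct edges of `F` sharing an endpoint have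
distinct colors. -/
def ProperlyColored {V ε C : Type*} (ends : ε → V × V) (c : ε → C) (F : Finset ε) : Prop :=
  ∀ e ∈ F, ∀ f ∈ F, e ≠ f → (∃ v, Inc ends e v ∧ Inc ends f v) → c e ≠ c f

/-- `F` is a properly colored forest with bundles. -/
def PCFB {V ε C : Type*} (ends : ε → V × V) (c : ε → C) (F : Finset ε) : Prop :=
  IsForestWithBundles ends F ∧ ProperlyColored ends c F

/-- There is a `u`–`v` path of length `n` in the support graph of `F`. -/
def SuppPath {V ε : Type*} (ends : ε → V × V) (F : Finset ε) (u v : V) (n : ℕ) : Prop :=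
  ∃ vs : Fin (n + 1) → V, Function.Injective vs ∧ vs 0 = u ∧ vs (Fin.last n) = v ∧
    ∀ i : Fin n, ∃ e ∈ F, Joins ends e (vs i.castSucc) (vs i.succ)

/-- `x` and `y` are connected by a walk using edges of `F`. -/
def ConnIn {V ε : Type*} (ends : ε → V × V) (F : Finset ε) (x y : V) : Prop :=
  ∃ n : ℕ, ∃ vs : Fin (n + 1) → V, vs 0 = x ∧ vs (Fin.last n) = y ∧
    ∀ i : Fin n, ∃ e ∈ F, Joins ends e (vs i.castSucc) (vs i.succ)

/-- The bundle of `F`-edges between `z` and `z'`. -/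
noncomputable def Bundle {V ε : Type*} (ends : ε → V × V) (F : Finset ε) (z z' : V) :
    Finset ε :=
  F.filter (fun e => Joins ends e z z')

/-! Split `O \ F` into the edges in colour conflict with an adjacent edge of `F` and the others.
A conflicting edge meets an edge of `F \ O` of its colour, and as `O` is properly coloured each
edge of `F \ O` is met in this way by at most two edges of `O`. A conflict-free edge `e` of `O \ F`
could be added to `F` unless its ends are joined by a path of length at least two in `supp F`.
Grouping these edges by their ends, Hall's theorem assigns to each group a distinct bundle of `F`
inside `F \ O` that separates its ends; Hall's condition is a rank count in the graphic matroid,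
where `O` being a forest with bundles supplies the independence. Condition (ii) bounds each group
by its bundle, so these edges number at most `|F \ O|`, and `|O \ F| ≤ 3 |F \ O|`. -/

open Finset Relation

section

variable {V ε C : Type*} {ends : ε → V × V}

section Joins

variable {e : ε} {a b u v : V}

lemma Joins.symm (h : Joins ends e u v) : Joins ends e v u := Or.symm h

lemma joins_comm : Joins ends e u v ↔ Joins ends e v u := or_comm

lemma joins_ends (e : ε) : Joins ends e (ends e).1 (ends e).2 := Or.inl rfl

lemma Joins.inc_left (h : Joins ends e u v) : Inc ends e u := by
  rcases h with h | h <;> simp [Inc, h]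

lemma Joins.inc_right (h : Joins ends e u v) : Inc ends e v := h.symm.inc_left

lemma joins_iff_sym2_mk : Joins ends e u v ↔ s((ends e).1, (ends e).2) = s(u, v) := by
  rcases h : ends e with ⟨x, y⟩
  simp [Joins, h, eq_comm, and_comm]

lemma Joins.eq_or_eq (h : Joins ends e a b) (h' : Joins ends e u v) :
    a = u ∧ b = v ∨ a = v ∧ b = u := by
  rw [joins_iff_sym2_mk] at h h'
  exact Sym2.eq_iff.mp (h.symm.trans h')

end Joins

def SuppAdj (ends : ε → V × V) (G : Finset ε) (x y : V) : Prop := ∃ e ∈ G, Joins ends e x y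

section Connectivity

variable {G G' : Finset ε} {e : ε} {x y z : V}

lemma SuppAdj.symm (h : SuppAdj ends G x y) : SuppAdj ends G y x :=
  let ⟨e, he, hj⟩ := h; ⟨e, he, hj.symm⟩

instance : Std.Symm (SuppAdj ends G) := ⟨fun _ _ => SuppAdj.symm⟩

lemma suppAdj_snoc {n : ℕ} {vs : Fin (n + 1) → V}
    (hstep : ∀ i : Fin n, SuppAdj ends G (vs i.castSucc) (vs i.succ))
    (hy : SuppAdj ends G (vs (Fin.last n)) y) (i : Fin (n + 1)) :
    SuppAdj ends G (Fin.snoc (α := fun _ => V) vs y i.castSucc)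
      (Fin.snoc (α := fun _ => V) vs y i.succ) := by
  induction i using Fin.lastCases with
  | last => simpa using hy
  | cast i =>
    rw [Fin.succ_castSucc, Fin.snoc_castSucc, Fin.snoc_castSucc]
    exact hstep i

lemma connIn_iff_reflTransGen : ConnIn ends G x y ↔ ReflTransGen (SuppAdj ends G) x y := by
  constructor
  · rintro ⟨n, vs, rfl, rfl, hstep⟩
    induction n with
    | zero => exact .refl
    | succ n ih => exact .head (hstep 0) (ih (Fin.tail vs) fun i => hstep i.succ)
  · intro h
    induction h with
    | refl => exact ⟨0, fun _ => x, rfl, rfl, Fin.elim0⟩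
    | tail _ hyz ih =>
      obtain ⟨n, vs, h0, hl, hstep⟩ := ih
      refine ⟨n + 1, Fin.snoc (α := fun _ => V) vs _, ?_, by simp,
        suppAdj_snoc hstep (hl ▸ hyz)⟩
      rw [← Fin.castSucc_zero, Fin.snoc_castSucc, h0]

@[refl]
lemma ConnIn.refl (x : V) : ConnIn ends G x x := connIn_iff_reflTransGen.mpr .refl

lemma ConnIn.symm (h : ConnIn ends G x y) : ConnIn ends G y x := by
  rw [connIn_iff_reflTransGen] at *
  exact Std.Symm.symm _ _ h

lemma ConnIn.trans (h : ConnIn ends G x y) (h' : ConnIn ends G y z) : ConnIn ends G x z := by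
  rw [connIn_iff_reflTransGen] at *
  exact h.trans h'

lemma SuppAdj.connIn (h : SuppAdj ends G x y) : ConnIn ends G x y :=
  connIn_iff_reflTransGen.mpr (.single h)

lemma connIn_of_mem (he : e ∈ G) (h : Joins ends e x y) : ConnIn ends G x y :=
  SuppAdj.connIn ⟨e, he, h⟩

lemma ConnIn.of_forall_connIn (hG : ∀ e ∈ G, ConnIn ends G' (ends e).1 (ends e).2)
    (h : ConnIn ends G x y) : ConnIn ends G' x y := by
  rw [connIn_iff_reflTransGen] at *
  refine reflTransGen_closed (fun a b ⟨e, he, hj⟩ => ?_) _ _ h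
  rw [← connIn_iff_reflTransGen]
  have hconn := hG e he
  rcases hj with hj | hj <;> rw [hj] at hconn
  exacts [hconn, hconn.symm]

lemma ConnIn.mono (hGG' : G ⊆ G') (h : ConnIn ends G x y) : ConnIn ends G' x y :=
  h.of_forall_connIn fun e he => connIn_of_mem (hGG' he) (joins_ends e)

end Connectivity

lemma Finset.card_image_le_card_image_of_eq_imp {α β γ : Type*} [DecidableEq β] [DecidableEq γ]
    {s : Finset α} {f : α → β} {g : α → γ}
    (h : ∀ a ∈ s, ∀ b ∈ s, f a = f b → g a = g b) :
    #(s.image g) ≤ #(s.image f) := by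
  rcases isEmpty_or_nonempty α with hα | hα
  · simp [s.eq_empty_of_isEmpty]
  refine card_le_card_of_surjOn (fun b => g (Function.invFunOn f s b)) ?_
  intro c hc
  obtain ⟨a, ha, rfl⟩ := mem_image.mp hc
  have hmem : f a ∈ f '' s := Set.mem_image_of_mem f ha
  exact ⟨f a, mem_image_of_mem f ha,
    h _ (Function.invFunOn_mem hmem) a ha (Function.invFunOn_eq hmem)⟩

noncomputable def componentCount (ends : ε → V × V) (G : Finset ε) (Z : Finset V) : ℕ :=
  #(Z.image fun v => {w | ConnIn ends G v w})

section ComponentCount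

variable {G G' S : Finset ε} {Z : Finset V} {e : ε} {x y z z' : V}

lemma connIn_class_eq_iff :
    {w | ConnIn ends G x w} = {w | ConnIn ends G y w} ↔ ConnIn ends G x y := by
  refine ⟨fun h => ?_, fun h => Set.ext fun w => ⟨h.symm.trans, h.trans⟩⟩
  have : y ∈ {w | ConnIn ends G y w} := ConnIn.refl y
  rwa [← h] at this

lemma componentCount_le_of_connIn_imp
    (h : ∀ x ∈ Z, ∀ y ∈ Z, ConnIn ends G x y → ConnIn ends G' x y) :
    componentCount ends G' Z ≤ componentCount ends G Z :=
  card_image_le_card_image_of_eq_imp fun x hx y hy hxy =>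
    connIn_class_eq_iff.mpr (h x hx y hy (connIn_class_eq_iff.mp hxy))

lemma ConnIn.of_union_parallel [DecidableEq ε] (hS : ∀ f ∈ S, Joins ends f z z')
    (h : ConnIn ends (G ∪ S) x y) :
    ConnIn ends G x y ∨ ConnIn ends G x z ∧ ConnIn ends G z' y ∨
      ConnIn ends G x z' ∧ ConnIn ends G z y := by
  rw [connIn_iff_reflTransGen] at h
  induction h with
  | refl => exact .inl (.refl x)
  | @tail b d _ hbd ih =>
    obtain ⟨f, hf, hj⟩ := hbd
    rcases mem_union.mp hf with hf | hf
    · have hbd : ConnIn ends G b d := connIn_of_mem hf hj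
      rcases ih with h | ⟨h1, h2⟩ | ⟨h1, h2⟩
      exacts [.inl (h.trans hbd), .inr (.inl ⟨h1, h2.trans hbd⟩),
        .inr (.inr ⟨h1, h2.trans hbd⟩)]
    · rcases hj.eq_or_eq (hS f hf) with ⟨rfl, rfl⟩ | ⟨rfl, rfl⟩ <;>
        rcases ih with h | ⟨h1, h2⟩ | ⟨h1, h2⟩
      exacts [.inr (.inl ⟨h, .refl _⟩), .inl (h1.trans h2.symm), .inl h1,
        .inr (.inr ⟨h, .refl _⟩), .inl h1, .inl (h1.trans h2.symm)]

lemma componentCount_le_union_parallel_add_one [DecidableEq ε]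
    (hS : ∀ f ∈ S, Joins ends f z z') :
    componentCount ends G Z ≤ componentCount ends (G ∪ S) Z + 1 := by
  set cls : V → Set V := fun v => {w | ConnIn ends G v w}
  set Z' := Z.filter fun v => ¬ ConnIn ends G v z
  have hsplit : Z.image cls ⊆ insert (cls z) (Z'.image cls) := by
    intro A hA
    obtain ⟨v, hv, rfl⟩ := mem_image.mp hA
    by_cases hvz : ConnIn ends G v z
    · exact mem_insert.mpr (.inl (connIn_class_eq_iff.mpr hvz))
    · exact mem_insert_of_mem (mem_image_of_mem cls (mem_filter.mpr ⟨hv, hvz⟩))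
  have hZ' : #(Z'.image cls) ≤ componentCount ends (G ∪ S) Z' := by
    refine card_image_le_card_image_of_eq_imp fun v hv w hw hvw => connIn_class_eq_iff.mpr ?_
    have hv := (mem_filter.mp hv).2
    have hw := (mem_filter.mp hw).2
    rcases (connIn_class_eq_iff.mp hvw).of_union_parallel hS with h | ⟨h, _⟩ | ⟨_, h⟩
    exacts [h, absurd h hv, absurd h.symm hw]
  calc componentCount ends G Z ≤ #(insert (cls z) (Z'.image cls)) := card_le_card hsplit
    _ ≤ #(Z'.image cls) + 1 := card_insert_le _ _
    _ ≤ componentCount ends (G ∪ S) Z' + 1 := by omega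
    _ ≤ componentCount ends (G ∪ S) Z + 1 := by
        gcongr
        exact card_le_card (image_subset_image (filter_subset _ Z))

lemma componentCount_insert_add_one_le [DecidableEq ε] (hj : Joins ends e x y)
    (hxy : ¬ ConnIn ends G x y) (hx : x ∈ Z) (hy : y ∈ Z) :
    componentCount ends (insert e G) Z + 1 ≤ componentCount ends G Z := by
  set cls : V → Set V := fun v => {w | ConnIn ends G v w}
  set cls' : V → Set V := fun v => {w | ConnIn ends (insert e G) v w}
  set Z' := Z.filter fun v => ¬ ConnIn ends G v x
  have hxy' : ConnIn ends (insert e G) x y := connIn_of_mem (mem_insert_self e G) hj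
  have himage : Z.image cls' = Z'.image cls' := by
    refine Subset.antisymm (fun A hA => ?_) (image_subset_image (filter_subset _ Z))
    obtain ⟨v, hv, rfl⟩ := mem_image.mp hA
    by_cases hvx : ConnIn ends G v x
    · have hvy : cls' v = cls' y :=
        connIn_class_eq_iff.mpr (((hvx.mono (subset_insert e G)).trans hxy'))
      exact hvy ▸ mem_image_of_mem cls' (mem_filter.mpr ⟨hy, fun h => hxy h.symm⟩)
    · exact mem_image_of_mem cls' (mem_filter.mpr ⟨hv, hvx⟩)
  have herase : Z'.image cls = (Z.image cls).erase (cls x) := by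
    ext A
    simp only [Z', mem_image, mem_filter, mem_erase]
    constructor
    · rintro ⟨v, ⟨hv, hvx⟩, rfl⟩
      exact ⟨fun h => hvx (connIn_class_eq_iff.mp h), v, hv, rfl⟩
    · rintro ⟨hA, v, hv, rfl⟩
      exact ⟨v, ⟨hv, fun h => hA (connIn_class_eq_iff.mpr h)⟩, rfl⟩
  have hle : #(Z.image cls') ≤ #(Z'.image cls) := by
    rw [himage]
    exact componentCount_le_of_connIn_imp fun _ _ _ _ h => h.mono (subset_insert e G)
  have hpos : cls x ∈ Z.image cls := mem_image_of_mem cls hx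
  rw [herase, card_erase_of_mem hpos] at hle
  have := card_pos.mpr ⟨_, hpos⟩
  change #(Z.image cls') + 1 ≤ #(Z.image cls)
  omega

lemma componentCount_le_union_biUnion_add_card [DecidableEq ε] {𝒯 : Finset (Finset ε)}
    (h𝒯 : ∀ S ∈ 𝒯, ∃ z z', ∀ f ∈ S, Joins ends f z z') :
    componentCount ends G Z ≤ componentCount ends (G ∪ 𝒯.biUnion id) Z + #𝒯 := by
  induction 𝒯 using Finset.induction_on with
  | empty => simp
  | @insert S 𝒯 hS ih =>
    obtain ⟨z, z', hpar⟩ := h𝒯 S (mem_insert_self S 𝒯)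
    have h := componentCount_le_union_parallel_add_one (G := G ∪ 𝒯.biUnion id) (Z := Z) hpar
    rw [union_assoc, union_comm _ S] at h
    rw [biUnion_insert, id_eq, card_insert_of_notMem hS]
    have := ih fun T hT => h𝒯 T (mem_insert_of_mem hT)
    omega

end ComponentCount

/-- The rank of `H ∪ P` in the graphic matroid exceeds that of `H` by `#P`, but by at most `#𝒯`
once `H ∪ ⋃ 𝒯` spans `P`; each parallel class adds at most one to the rank. -/
theorem card_le_card_of_connIn_union [DecidableEq ε] {H P : Finset ε} {𝒯 : Finset (Finset ε)}
    (h𝒯 : ∀ S ∈ 𝒯, ∃ z z', ∀ f ∈ S, Joins ends f z z')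
    (hindep : ∀ e ∈ P, ¬ ConnIn ends (H ∪ P.erase e) (ends e).1 (ends e).2)
    (hspan : ∀ e ∈ P, ConnIn ends (H ∪ 𝒯.biUnion id) (ends e).1 (ends e).2) :
    #P ≤ #𝒯 := by
  set Z := P.image (fun e => (ends e).1) ∪ P.image (fun e => (ends e).2)
  have hadd : ∀ Q ⊆ P, componentCount ends (H ∪ Q) Z + #Q ≤ componentCount ends H Z := by
    intro Q hQ
    induction Q using Finset.induction_on with
    | empty => simp
    | @insert e Q he ih =>
      have heP := hQ (mem_insert_self e Q)
      have hsub : H ∪ Q ⊆ H ∪ P.erase e := union_subset_union_right fun f hf =>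
        mem_erase.mpr ⟨fun h => he (h ▸ hf), hQ (mem_insert_of_mem hf)⟩
      have := componentCount_insert_add_one_le (Z := Z) (joins_ends e)
        (fun h => hindep e heP (h.mono hsub))
        (mem_union_left _ (mem_image_of_mem (fun e => (ends e).1) heP))
        (mem_union_right _ (mem_image_of_mem (fun e => (ends e).2) heP))
      rw [union_insert, card_insert_of_notMem he]
      have := ih fun f hf => hQ (mem_insert_of_mem hf)
      omega
  have hspan' : componentCount ends (H ∪ 𝒯.biUnion id) Z ≤ componentCount ends (H ∪ P) Z :=
    componentCount_le_of_connIn_imp fun x _ y _ h => h.of_forall_connIn fun e he =>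
      (mem_union.mp he).elim (fun h => connIn_of_mem (mem_union_left _ h) (joins_ends e))
        (hspan e)
  have := hadd P Subset.rfl
  have := componentCount_le_union_biUnion_add_card (G := H) (Z := Z) h𝒯
  omega

section Paths

variable {G G' : Finset ε} {a b c : V} {m n : ℕ}

lemma SuppPath.connIn (h : SuppPath ends G a b n) : ConnIn ends G a b :=
  let ⟨vs, _, h0, hl, hstep⟩ := h
  ⟨n, vs, h0, hl, hstep⟩

lemma SuppPath.symm (h : SuppPath ends G a b n) : SuppPath ends G b a n := by
  obtain ⟨vs, hinj, h0, hl, hstep⟩ := h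
  refine ⟨vs ∘ Fin.rev, hinj.comp Fin.rev_injective, by simp [hl], by simp [h0], fun k => ?_⟩
  simpa [SuppAdj, Fin.rev_castSucc, Fin.rev_succ] using SuppAdj.symm (hstep k.rev)

lemma SuppPath.mono (hGG' : G ⊆ G') (h : SuppPath ends G a b n) : SuppPath ends G' a b n := by
  obtain ⟨vs, hinj, h0, hl, hstep⟩ := h
  exact ⟨vs, hinj, h0, hl, fun i => let ⟨e, he, hj⟩ := hstep i; ⟨e, hGG' he, hj⟩⟩

lemma SuppPath.ne (h : SuppPath ends G a b n) (hn : n ≠ 0) : a ≠ b := by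
  obtain ⟨vs, hinj, rfl, rfl, -⟩ := h
  exact hinj.ne (Fin.ext_iff.not.mpr (by simpa using hn.symm))

/-- Extending a path by an edge either closes a loop, which is cut off, or gives a longer path. -/
lemma SuppPath.exists_of_suppAdj (h : SuppPath ends G a b n) (hbc : SuppAdj ends G b c) :
    ∃ m, SuppPath ends G a c m := by
  obtain ⟨vs, hinj, h0, hl, hstep⟩ := h
  by_cases hc : c ∈ Set.range vs
  · obtain ⟨k, rfl⟩ := hc
    have hkn : (k : ℕ) ≤ n := Nat.lt_succ_iff.mp k.2
    exact ⟨k, fun i => vs (Fin.castLE (by omega) i), hinj.comp (Fin.castLE_injective (by omega)),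
      (congrArg vs (Fin.ext (by simp))).trans h0, congrArg vs (Fin.ext (by simp)),
      fun i => hstep (Fin.castLE hkn i)⟩
  · exact ⟨n + 1, Fin.snoc vs c, Fin.snoc_injective_of_injective hinj hc,
      by rw [← Fin.castSucc_zero, Fin.snoc_castSucc, h0], by simp,
      suppAdj_snoc hstep (hl ▸ hbc)⟩

lemma ConnIn.exists_suppPath (h : ConnIn ends G a b) : ∃ n, SuppPath ends G a b n := by
  rw [connIn_iff_reflTransGen] at h
  induction h with
  | refl =>
    exact ⟨0, fun _ => a, fun i j _ => Subsingleton.elim (α := Fin 1) i j, rfl, rfl, Fin.elim0⟩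
  | tail _ hbc ih =>
    obtain ⟨n, hp⟩ := ih
    exact hp.exists_of_suppAdj hbc

lemma ConnIn.exists_suppPath_two_le (h : ConnIn ends G a b) (hab : a ≠ b)
    (hno : ∀ f ∈ G, ¬ Joins ends f a b) : ∃ m, 2 ≤ m ∧ SuppPath ends G a b m := by
  obtain ⟨m, hp⟩ := h.exists_suppPath
  refine ⟨m, ?_, hp⟩
  obtain ⟨vs, -, rfl, rfl, hstep⟩ := hp
  rcases m with _ | _ | m
  · exact absurd rfl hab
  · obtain ⟨f, hf, hj⟩ := hstep 0
    exact absurd hj (hno f hf)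
  · omega

lemma connIn_of_suppAdj_of_le {vs : Fin (n + 1) → V} {p q : Fin (n + 1)} (hpq : p ≤ q)
    (hstep : ∀ k : Fin n, p ≤ k.castSucc → k.succ ≤ q →
      SuppAdj ends G (vs k.castSucc) (vs k.succ)) :
    ConnIn ends G (vs p) (vs q) := by
  induction q using Fin.induction with
  | zero => rw [Fin.le_zero_iff.mp hpq]
  | succ k ih =>
    by_cases hpk : p ≤ k.castSucc
    · exact (ih hpk fun j hj hjk => hstep j hj (hjk.trans (Fin.castSucc_le_succ k))).trans
        (SuppAdj.connIn (hstep k hpk le_rfl))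
    · rw [le_antisymm hpq (Fin.castSucc_lt_iff_succ_le.mp (not_le.mp hpk))]

end Paths

section Forests

variable {G : Finset ε} {a b z z' : V} {m n : ℕ}

lemma mem_bundle {e : ε} : e ∈ Bundle ends G z z' ↔ e ∈ G ∧ Joins ends e z z' := mem_filter

lemma bundle_eq_of_joins {e : ε} {u v : V} (h : Joins ends e u v) (h' : Joins ends e z z') :
    Bundle ends G u v = Bundle ends G z z' := by
  rcases h.eq_or_eq h' with ⟨rfl, rfl⟩ | ⟨rfl, rfl⟩
  · rfl
  · ext f
    simp only [mem_bundle, joins_comm (u := u)]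

lemma isCycleIn_of_suppAdj (hn : 3 ≤ n) {vs : ZMod n → V} (hinj : Function.Injective vs)
    (hadj : ∀ i, SuppAdj ends G (vs i) (vs (i + 1))) : IsCycleIn ends G n := by
  choose es hes hjs using hadj
  refine ⟨vs, es, hinj, fun i j hij => ?_, fun i => ⟨hes i, hjs i⟩⟩
  rcases (hjs i).eq_or_eq (hij ▸ hjs j) with ⟨h, -⟩ | ⟨h1, h2⟩
  · exact hinj h
  · -- two consecutive steps with the same edge would force `2 = 0` in `ZMod n`
    have htwo : ((2 : ℕ) : ZMod n) = 0 := by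
      rw [hinj h1] at h2
      push_cast
      linear_combination hinj h2
    exact absurd (Nat.le_of_dvd two_pos ((ZMod.natCast_eq_zero_iff 2 n).mp htwo)) (by omega)

lemma IsForestWithBundles.not_joins_of_suppPath (hG : IsForestWithBundles ends G)
    (hp : SuppPath ends G a b m) (hm : 2 ≤ m) {g : ε} (hg : g ∈ G) : ¬ Joins ends g a b := by
  intro hgab
  obtain ⟨vs, hinj, rfl, rfl, hstep⟩ := hp
  refine hG ⟨m + 1, by omega, isCycleIn_of_suppAdj (by omega) (vs := vs) hinj ?_⟩
  show ∀ i : Fin (m + 1), SuppAdj ends G (vs i) (vs (i + 1))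
  intro i
  induction i using Fin.lastCases with
  | last => rw [Fin.last_add_one]; exact ⟨g, hg, hgab.symm⟩
  | cast k => rw [Fin.coeSucc_eq_succ]; exact hstep k

lemma IsForestWithBundles.not_connIn_sdiff_bundle [DecidableEq ε]
    (hG : IsForestWithBundles ends G) (hzz' : z ≠ z') (hS : (Bundle ends G z z').Nonempty) :
    ¬ ConnIn ends (G \ Bundle ends G z z') z z' := by
  obtain ⟨e₀, he₀⟩ := hS
  intro h
  obtain ⟨m, hm, hp⟩ := h.exists_suppPath_two_le hzz' fun f hf hj =>
    (mem_sdiff.mp hf).2 (mem_bundle.mpr ⟨(mem_sdiff.mp hf).1, hj⟩)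
  exact hG.not_joins_of_suppPath (hp.mono sdiff_subset) hm (mem_bundle.mp he₀).1
    (mem_bundle.mp he₀).2

/-- The rest of the path survives the removal of the bundle and would reconnect the two ends
of the step. -/
lemma IsForestWithBundles.not_connIn_sdiff_bundle_of_step [DecidableEq ε]
    (hG : IsForestWithBundles ends G) {vs : Fin (n + 1) → V} (hinj : Function.Injective vs)
    (hstep : ∀ k : Fin n, SuppAdj ends G (vs k.castSucc) (vs k.succ)) (i : Fin n) :
    ¬ ConnIn ends (G \ Bundle ends G (vs i.castSucc) (vs i.succ)) (vs 0) (vs (Fin.last n)) := by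
  set S := Bundle ends G (vs i.castSucc) (vs i.succ)
  have hne : vs i.castSucc ≠ vs i.succ := hinj.ne (Fin.castSucc_lt_succ (i := i)).ne
  have hS : S.Nonempty := let ⟨e, he, hj⟩ := hstep i; ⟨e, mem_bundle.mpr ⟨he, hj⟩⟩
  have hother : ∀ k : Fin n, k ≠ i → SuppAdj ends (G \ S) (vs k.castSucc) (vs k.succ) := by
    intro k hki
    obtain ⟨e, he, hj⟩ := hstep k
    refine ⟨e, mem_sdiff.mpr ⟨he, fun heS => ?_⟩, hj⟩
    rcases hj.eq_or_eq (mem_bundle.mp heS).2 with ⟨h, -⟩ | ⟨h1, h2⟩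
    · exact hki (Fin.castSucc_injective _ (hinj h))
    · have h1 := Fin.val_eq_of_eq (hinj h1)
      have h2 := Fin.val_eq_of_eq (hinj h2)
      simp only [Fin.val_castSucc, Fin.val_succ] at h1 h2
      omega
  have hpre : ConnIn ends (G \ S) (vs 0) (vs i.castSucc) :=
    connIn_of_suppAdj_of_le (Fin.zero_le _) fun k _ hk =>
      hother k (Fin.ne_of_lt (Fin.succ_le_castSucc_iff.mp hk))
  have hsuf : ConnIn ends (G \ S) (vs i.succ) (vs (Fin.last n)) :=
    connIn_of_suppAdj_of_le (Fin.le_last _) fun k hk _ =>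
      hother k (Fin.ne_of_gt (Fin.succ_le_castSucc_iff.mp hk))
  exact fun h => hG.not_connIn_sdiff_bundle hne hS ((hpre.symm.trans h).trans hsuf.symm)

end Forests

def HasColorConflict (ends : ε → V × V) (c : ε → C) (F : Finset ε) (e : ε) : Prop :=
  ∃ f ∈ F, c f = c e ∧ ∃ w, Inc ends f w ∧ Inc ends e w

section Insertion

variable {c : ε → C} {F G : Finset ε} {e : ε} {n : ℕ}

lemma ProperlyColored.insert [DecidableEq ε] (hF : ProperlyColored ends c F)
    (he : ¬ HasColorConflict ends c F e) : ProperlyColored ends c (insert e F) := by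
  intro a ha b hb hab ⟨w, hwa, hwb⟩
  rcases mem_insert.mp ha with rfl | haF <;> rcases mem_insert.mp hb with rfl | hbF
  · exact absurd rfl hab
  · exact fun hc => he ⟨b, hbF, hc.symm, w, hwb, hwa⟩
  · exact fun hc => he ⟨a, haF, hc, w, hwa, hwb⟩
  · exact hF a haF b hbF hab ⟨w, hwa, hwb⟩

lemma connIn_of_suppAdj_of_ne [NeZero n] {vs : ZMod n → V} {i₀ : ZMod n}
    (h : ∀ i ≠ i₀, SuppAdj ends G (vs i) (vs (i + 1))) :
    ConnIn ends G (vs (i₀ + 1)) (vs i₀) := by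
  have hwalk : ∀ k < n, ConnIn ends G (vs (i₀ + 1)) (vs (i₀ + 1 + k)) := by
    intro k hk
    induction k with
    | zero => simpa using ConnIn.refl _
    | succ k ih =>
      have hne : i₀ + 1 + (k : ZMod n) ≠ i₀ := by
        intro heq
        have : ((k + 1 : ℕ) : ZMod n) = 0 := by push_cast; linear_combination heq
        exact Nat.not_dvd_of_pos_of_lt k.succ_pos hk ((ZMod.natCast_eq_zero_iff _ _).mp this)
      have hstep := (h _ hne).connIn
      rw [add_assoc (i₀ + 1), ← Nat.cast_add_one] at hstep
      exact (ih (by omega)).trans hstep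
  have hlast : i₀ + 1 + ((n - 1 : ℕ) : ZMod n) = i₀ := by
    rw [Nat.cast_sub (NeZero.one_le), ZMod.natCast_self, Nat.cast_one]
    ring
  simpa only [hlast] using hwalk (n - 1) (Nat.sub_lt (NeZero.pos n) one_pos)

/-- The path has length at least two because a single `F`-edge parallel to `e` could replace `e`
in the cycle. -/
lemma IsForestWithBundles.exists_suppPath_of_not_insert [DecidableEq ε]
    (hF : IsForestWithBundles ends F) (he : ¬ IsForestWithBundles ends (insert e F)) :
    ∃ m, 2 ≤ m ∧ SuppPath ends F (ends e).1 (ends e).2 m := by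
  obtain ⟨n, hn, vs, es, hvinj, heinj, hcyc⟩ := not_not.mp he
  have : Fact (1 < n) := ⟨by omega⟩
  have hmem : ∀ i, es i ≠ e → es i ∈ F := fun i h => mem_of_mem_insert_of_ne (hcyc i).1 h
  obtain ⟨i₀, rfl⟩ : ∃ i₀, es i₀ = e := by
    by_contra! h
    exact hF ⟨n, hn, vs, es, hvinj, heinj, fun i => ⟨hmem i (h i), (hcyc i).2⟩⟩
  have hadj : ∀ i ≠ i₀, SuppAdj ends F (vs i) (vs (i + 1)) :=
    fun i hi => ⟨es i, hmem i (heinj.ne hi), (hcyc i).2⟩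
  have hne : vs (i₀ + 1) ≠ vs i₀ := hvinj.ne (by simp)
  have hno : ∀ f ∈ F, ¬ Joins ends f (vs (i₀ + 1)) (vs i₀) := fun f hf hj =>
    hF ⟨n, hn, isCycleIn_of_suppAdj hn hvinj fun i =>
      if hi : i = i₀ then hi ▸ ⟨f, hf, hj.symm⟩ else hadj i hi⟩
  obtain ⟨m, hm, hp⟩ := (connIn_of_suppAdj_of_ne hadj).exists_suppPath_two_le hne hno
  rcases (hcyc i₀).2.eq_or_eq (joins_ends (es i₀)) with ⟨h1, h2⟩ | ⟨h1, h2⟩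
  · exact ⟨m, hm, h1 ▸ h2 ▸ hp.symm⟩
  · exact ⟨m, hm, h1 ▸ h2 ▸ hp⟩

lemma PCFB.exists_suppPath_of_not_insert [DecidableEq ε] (hF : PCFB ends c F)
    (he : ¬ HasColorConflict ends c F e) (hins : ¬ PCFB ends c (insert e F)) :
    ∃ m, 2 ≤ m ∧ SuppPath ends F (ends e).1 (ends e).2 m :=
  hF.1.exists_suppPath_of_not_insert fun h => hins ⟨h, hF.2.insert he⟩

end Insertion

section ColorConflicts

variable {c : ε → C} {F O : Finset ε}

lemma ProperlyColored.card_filter_color_inc_le_one (hO : ProperlyColored ends c O) (k : C)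
    (w : V) : #(O.filter fun e => c e = k ∧ Inc ends e w) ≤ 1 := by
  refine card_le_one.mpr fun a ha b hb => by_contra fun hab => ?_
  simp only [mem_filter] at ha hb
  exact hO a ha.1 b hb.1 hab ⟨w, ha.2.2, hb.2.2⟩ (ha.2.1.trans hb.2.1.symm)

/-- An edge of `O \ F` in colour conflict with `F` conflicts with an edge of `F \ O`, and each
edge of `F \ O` has at most one edge of `O` of its colour at each of its two endpoints. -/
lemma ProperlyColored.card_filter_hasColorConflict_le [DecidableEq ε]
    (hO : ProperlyColored ends c O) (F : Finset ε) :
    #((O \ F).filter (HasColorConflict ends c F)) ≤ 2 * #(F \ O) := by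
  set D : ε → Finset ε := fun f => (O.filter fun e => c e = c f ∧ Inc ends e (ends f).1) ∪
    (O.filter fun e => c e = c f ∧ Inc ends e (ends f).2)
  have hsub : (O \ F).filter (HasColorConflict ends c F) ⊆ (F \ O).biUnion D := by
    intro e he
    obtain ⟨heOF, f, hf, hcf, w, hfw, hew⟩ := mem_filter.mp he
    obtain ⟨heO, heF⟩ := mem_sdiff.mp heOF
    have hfO : f ∉ O := fun hfO =>
      hO e heO f hfO (fun h => heF (h ▸ hf)) ⟨w, hew, hfw⟩ hcf.symm
    refine mem_biUnion.mpr ⟨f, mem_sdiff.mpr ⟨hf, hfO⟩, ?_⟩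
    rcases hfw with rfl | rfl
    · exact mem_union_left _ (mem_filter.mpr ⟨heO, hcf.symm, hew⟩)
    · exact mem_union_right _ (mem_filter.mpr ⟨heO, hcf.symm, hew⟩)
  calc _ ≤ #((F \ O).biUnion D) := card_le_card hsub
    _ ≤ ∑ f ∈ F \ O, #(D f) := card_biUnion_le
    _ ≤ ∑ _f ∈ F \ O, 2 := sum_le_sum fun f _ => (card_union_le _ _).trans
        (add_le_add (hO.card_filter_color_inc_le_one _ _) (hO.card_filter_color_inc_le_one _ _))
    _ = 2 * #(F \ O) := by rw [sum_const, smul_eq_mul, mul_comm]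

end ColorConflicts

noncomputable def bundlesDisjointFrom (ends : ε → V × V) (F O : Finset ε) :
    Finset (Finset ε) :=
  (F.image fun f => Bundle ends F (ends f).1 (ends f).2).filter fun S => Disjoint S O

section Exchange

variable {F O G : Finset ε} {e : ε} {a b : V} {m : ℕ}

lemma mem_bundlesDisjointFrom {S : Finset ε} : S ∈ bundlesDisjointFrom ends F O ↔
    (∃ f ∈ F, Bundle ends F (ends f).1 (ends f).2 = S) ∧ Disjoint S O := by
  simp [bundlesDisjointFrom]

lemma subset_sdiff_of_mem_bundlesDisjointFrom [DecidableEq ε] {S : Finset ε}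
    (hS : S ∈ bundlesDisjointFrom ends F O) : S ⊆ F \ O := by
  obtain ⟨⟨f, -, rfl⟩, hdisj⟩ := mem_bundlesDisjointFrom.mp hS
  exact subset_sdiff.mpr ⟨filter_subset _ F, hdisj⟩

lemma disjoint_of_mem_bundlesDisjointFrom {S T : Finset ε}
    (hS : S ∈ bundlesDisjointFrom ends F O) (hT : T ∈ bundlesDisjointFrom ends F O)
    (hST : S ≠ T) : Disjoint S T := by
  obtain ⟨⟨f, -, rfl⟩, -⟩ := mem_bundlesDisjointFrom.mp hS
  obtain ⟨⟨g, -, rfl⟩, -⟩ := mem_bundlesDisjointFrom.mp hT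
  exact disjoint_left.mpr fun e he he' =>
    hST (bundle_eq_of_joins (mem_bundle.mp he).2 (mem_bundle.mp he').2)

lemma IsForestWithBundles.not_connIn_of_forall_parallel [DecidableEq ε]
    (hO : IsForestWithBundles ends O) (heO : e ∈ O) (hne : (ends e).1 ≠ (ends e).2)
    (hG : ∀ f ∈ G, ∃ g ∈ O, Joins ends g (ends f).1 (ends f).2 ∧
      ¬ Joins ends g (ends e).1 (ends e).2) :
    ¬ ConnIn ends G (ends e).1 (ends e).2 := fun h =>
  hO.not_connIn_sdiff_bundle hne ⟨e, mem_bundle.mpr ⟨heO, joins_ends e⟩⟩ <|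
    h.of_forall_connIn fun f hf =>
      let ⟨_, hgO, hgf, hge⟩ := hG f hf
      connIn_of_mem (mem_sdiff.mpr ⟨hgO, fun hg => hge (mem_bundle.mp hg).2⟩) hgf

lemma IsForestWithBundles.connIn_union_separating [DecidableEq ε]
    (hF : IsForestWithBundles ends F) (hp : SuppPath ends F a b m) :
    ConnIn ends (F.filter (fun f => ¬ Disjoint (Bundle ends F (ends f).1 (ends f).2) O) ∪
      ((bundlesDisjointFrom ends F O).filter fun S => ¬ ConnIn ends (F \ S) a b).biUnion id)
      a b := by
  obtain ⟨vs, hinj, rfl, rfl, hstep⟩ := hp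
  refine ⟨m, vs, rfl, rfl, fun k => ?_⟩
  obtain ⟨f, hf, hj⟩ := hstep k
  by_cases hdisj : Disjoint (Bundle ends F (ends f).1 (ends f).2) O
  · have hsep :
        ¬ ConnIn ends (F \ Bundle ends F (ends f).1 (ends f).2) (vs 0) (vs (Fin.last m)) := by
      rw [bundle_eq_of_joins (joins_ends f) hj]
      exact hF.not_connIn_sdiff_bundle_of_step hinj hstep k
    refine ⟨f, mem_union_right _ (mem_biUnion.mpr ⟨_, mem_filter.mpr ⟨?_, hsep⟩,
      mem_bundle.mpr ⟨hf, joins_ends f⟩⟩), hj⟩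
    exact mem_bundlesDisjointFrom.mpr ⟨⟨f, hf, rfl⟩, hdisj⟩
  · exact ⟨f, mem_union_left _ (mem_filter.mpr ⟨hf, hdisj⟩), hj⟩

/-- Hall's condition holds by `card_le_card_of_connIn_union`, with `H` the edges of `F` whose
bundle meets `O`: these are parallel to edges of `O`, so `O` being a forest with bundles makes
the edges `p i` independent over `H`. -/
theorem exists_injective_separating_bundle [DecidableEq ε]
    (hF : IsForestWithBundles ends F) (hO : IsForestWithBundles ends O) {ι : Type*}
    (p : ι → ε) (hpO : ∀ i, p i ∈ O)
    (hpath : ∀ i, ∃ m, 2 ≤ m ∧ SuppPath ends F (ends (p i)).1 (ends (p i)).2 m)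
    (hp : ∀ i j, Joins ends (p j) (ends (p i)).1 (ends (p i)).2 → j = i) :
    ∃ φ : ι → Finset ε, Function.Injective φ ∧
      ∀ i, φ i ∈ bundlesDisjointFrom ends F O ∧
        ¬ ConnIn ends (F \ φ i) (ends (p i)).1 (ends (p i)).2 := by
  set N : ι → Finset (Finset ε) := fun i => (bundlesDisjointFrom ends F O).filter
    fun S => ¬ ConnIn ends (F \ S) (ends (p i)).1 (ends (p i)).2
  set H := F.filter fun f => ¬ Disjoint (Bundle ends F (ends f).1 (ends f).2) O
  suffices hall : ∀ s : Finset ι, #s ≤ #(s.biUnion N) by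
    obtain ⟨φ, hinj, hφ⟩ := (all_card_le_biUnion_card_iff_exists_injective N).mp hall
    exact ⟨φ, hinj, fun i => mem_filter.mp (hφ i)⟩
  intro s
  have hpinj : Function.Injective p := fun i j h => hp j i (by rw [h]; exact joins_ends _)
  rw [← card_image_of_injective s hpinj]
  refine card_le_card_of_connIn_union (ends := ends) (H := H) (fun S hS => ?_)
    (fun e he => ?_) (fun e he => ?_)
  · obtain ⟨i, -, hSi⟩ := mem_biUnion.mp hS
    obtain ⟨⟨f, -, rfl⟩, -⟩ := mem_bundlesDisjointFrom.mp (mem_filter.mp hSi).1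
    exact ⟨_, _, fun g hg => (mem_bundle.mp hg).2⟩
  · obtain ⟨i, -, rfl⟩ := mem_image.mp he
    obtain ⟨m, hm, hpi⟩ := hpath i
    have hnoF : ∀ g ∈ F, ¬ Joins ends g (ends (p i)).1 (ends (p i)).2 :=
      fun g hg => hF.not_joins_of_suppPath hpi hm hg
    refine hO.not_connIn_of_forall_parallel (hpO i) (hpi.ne (by omega)) fun f hf => ?_
    rcases mem_union.mp hf with hf | hf
    · obtain ⟨g, hgS, hgO⟩ := not_disjoint_iff.mp (mem_filter.mp hf).2
      exact ⟨g, hgO, (mem_bundle.mp hgS).2, hnoF g (mem_bundle.mp hgS).1⟩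
    · obtain ⟨hfi, hf⟩ := mem_erase.mp hf
      obtain ⟨j, -, rfl⟩ := mem_image.mp hf
      exact ⟨p j, hpO j, joins_ends _, fun h => hfi (congrArg p (hp i j h))⟩
  · obtain ⟨i, hi, rfl⟩ := mem_image.mp he
    obtain ⟨m, -, hpi⟩ := hpath i
    refine (hF.connIn_union_separating (O := O) hpi).mono (union_subset_union_right ?_)
    exact biUnion_subset_biUnion_of_subset_left _ (subset_biUnion_of_mem N hi)

/-- Local optimality condition (ii). -/
def ExchangeOptimal [Fintype ε] [DecidableEq ε] (ends : ε → V × V) (c : ε → C)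
    (F : Finset ε) : Prop :=
  ∀ u v z z' : V,
    ConnIn ends F u v →
    (Bundle ends F z z').Nonempty →
    ¬ ConnIn ends (F \ Bundle ends F z z') u v →
    (Finset.univ.filter (fun e : ε => e ∉ F ∧ Joins ends e u v ∧
        ∀ f ∈ F \ Bundle ends F z z', (Inc ends f u ∨ Inc ends f v) → c f ≠ c e)).card
      ≤ (Bundle ends F z z').card

lemma ExchangeOptimal.card_le [Fintype ε] [DecidableEq ε] {c : ε → C}
    (hexch : ExchangeOptimal ends c F) {A : Finset ε} {u v z z' : V} (huv : ConnIn ends F u v)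
    (hS : (Bundle ends F z z').Nonempty) (hsep : ¬ ConnIn ends (F \ Bundle ends F z z') u v)
    (hA : ∀ e ∈ A, e ∉ F ∧ Joins ends e u v ∧ ¬ HasColorConflict ends c F e) :
    #A ≤ #(Bundle ends F z z') := by
  refine (card_le_card fun e he => ?_).trans (hexch u v z z' huv hS hsep)
  obtain ⟨heF, hj, hfree⟩ := hA e he
  refine mem_filter.mpr ⟨mem_univ e, heF, hj, fun g hg hinc hcg => ?_⟩
  rcases hinc with hinc | hinc
  exacts [hfree ⟨g, (mem_sdiff.mp hg).1, hcg, _, hinc, hj.inc_left⟩,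
    hfree ⟨g, (mem_sdiff.mp hg).1, hcg, _, hinc, hj.inc_right⟩]

end Exchange

/-- Grouping the conflict-free edges of `O \ F` by their pair of ends, each group lies in the
exchange set of condition (ii) for its own separating bundle, and these bundles are distinct,
hence disjoint, subsets of `F \ O`. -/
theorem card_filter_not_hasColorConflict_le [Fintype ε] [DecidableEq ε] {c : ε → C}
    {F O : Finset ε} (hF : PCFB ends c F) (hmax : ∀ e ∉ F, ¬ PCFB ends c (insert e F))
    (hexch : ExchangeOptimal ends c F) (hO : IsForestWithBundles ends O) :
    #((O \ F).filter fun e => ¬ HasColorConflict ends c F e) ≤ #(F \ O) := by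
  set A := (O \ F).filter fun e => ¬ HasColorConflict ends c F e
  set pair : ε → Sym2 V := fun e => s((ends e).1, (ends e).2)
  set P := A.image pair
  have hrep : ∀ q : P, ∃ e ∈ A, pair e = q := fun q => mem_image.mp q.2
  choose p hpA hpq using hrep
  have hpO : ∀ q, p q ∈ O := fun q => (mem_sdiff.mp (mem_filter.mp (hpA q)).1).1
  have hpath : ∀ q, ∃ m, 2 ≤ m ∧ SuppPath ends F (ends (p q)).1 (ends (p q)).2 m := fun q =>
    have hq := mem_filter.mp (hpA q)
    hF.exists_suppPath_of_not_insert hq.2 (hmax _ (mem_sdiff.mp hq.1).2)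
  obtain ⟨φ, hφinj, hφ⟩ := exists_injective_separating_bundle hF.1 hO p hpO hpath
    fun q r h => Subtype.ext ((hpq r).symm.trans ((joins_iff_sym2_mk.mp h).trans (hpq q)))
  have hfiber : ∀ q : P, #(A.filter fun e => pair e = q) ≤ #(φ q) := by
    intro q
    obtain ⟨⟨f, hf, hφf⟩, -⟩ := mem_bundlesDisjointFrom.mp (hφ q).1
    obtain ⟨m, -, hpq'⟩ := hpath q
    have hsep := (hφ q).2
    rw [← hφf] at hsep ⊢
    refine hexch.card_le hpq'.connIn ⟨f, mem_bundle.mpr ⟨hf, joins_ends f⟩⟩ hsep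
      fun e he => ?_
    obtain ⟨heA, heq⟩ := mem_filter.mp he
    obtain ⟨heOF, hfree⟩ := mem_filter.mp heA
    exact ⟨(mem_sdiff.mp heOF).2, joins_iff_sym2_mk.mpr (heq.trans (hpq q).symm), hfree⟩
  have hdisj : (P.attach : Set P).PairwiseDisjoint φ := fun q _ r _ hqr =>
    disjoint_of_mem_bundlesDisjointFrom (hφ q).1 (hφ r).1 (hφinj.ne hqr)
  calc #A = ∑ q ∈ P, #(A.filter fun e => pair e = q) := card_eq_sum_card_image pair A
    _ = ∑ q ∈ P.attach, #(A.filter fun e => pair e = q) := (sum_attach P _).symm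
    _ ≤ ∑ q ∈ P.attach, #(φ q) := sum_le_sum fun q _ => hfiber q
    _ = #(P.attach.biUnion φ) := (card_biUnion hdisj).symm
    _ ≤ #(F \ O) := card_le_card (biUnion_subset.mpr fun q _ =>
        subset_sdiff_of_mem_bundlesDisjointFrom (hφ q).1)

end

theorem bundles_local_search_approx_general {V ε C : Type*} [Fintype ε] [DecidableEq ε]
    (ends : ε → V × V)
    (c : ε → C) (F : Finset ε) (hF : PCFB ends c F)
    (hmax : ∀ e ∉ F, ¬ PCFB ends c (insert e F))
    (hexch : ∀ u v z z' : V,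
      ConnIn ends F u v →
      (Bundle ends F z z').Nonempty →
      ¬ ConnIn ends (F \ Bundle ends F z z') u v →
      (Finset.univ.filter (fun e : ε => e ∉ F ∧ Joins ends e u v ∧
          ∀ f ∈ F \ Bundle ends F z z', (Inc ends f u ∨ Inc ends f v) → c f ≠ c e)).card
        ≤ (Bundle ends F z z').card)
    (O : Finset ε) (hO : PCFB ends c O) :
    (O \ F).card ≤ 3 * (F \ O).card ∧ O.card ≤ 3 * F.card := by
  have hconflict := hO.2.card_filter_hasColorConflict_le F
  have hfree := card_filter_not_hasColorConflict_le hF hmax hexch hO.1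
  have hsplit := card_filter_add_card_filter_not (s := O \ F) (p := HasColorConflict ends c F)
  have hO_card := card_sdiff_add_card_inter O F
  have hF_card := card_sdiff_add_card_inter F O
  rw [inter_comm] at hF_card
  omega

/-- The `1/3`-approximation guarantee of the bundles local search: if `F` is a properly
colored forest with bundles satisfying the two local-optimality conditions of the
algorithm — (i) no single edge can be added, and (ii) no bundle on a `u`–`v` path of
`supp F` can be profitably exchanged for a larger bundle between `u` and `v` — then for
every properly colored forest with bundles `O` we have `|O \ F| ≤ 3 |F \ O|`, and
consequently `|O| ≤ 3 |F|`. -/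
theorem bundles_local_search_approx {V ε C : Type*} [Fintype ε] [DecidableEq ε]
    (ends : ε → V × V) (hloopless : ∀ e : ε, (ends e).1 ≠ (ends e).2)
    (c : ε → C) (F : Finset ε) (hF : PCFB ends c F)
    (hmax : ∀ e ∉ F, ¬ PCFB ends c (insert e F))
    (hexch : ∀ u v z z' : V,
      ConnIn ends F u v →
      (Bundle ends F z z').Nonempty →
      ¬ ConnIn ends (F \ Bundle ends F z z') u v →
      (Finset.univ.filter (fun e : ε => e ∉ F ∧ Joins ends e u v ∧
          ∀ f ∈ F \ Bundle ends F z z', (Inc ends f u ∨ Inc ends f v) → c f ≠ c e)).card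
        ≤ (Bundle ends F z z').card)
    (O : Finset ε) (hO : PCFB ends c O) :
    (O \ F).card ≤ 3 * (F \ O).card ∧ O.card ≤ 3 * F.card :=
  bundles_local_search_approx_general ends c F hF hmax hexch O hO
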